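/- arXiv:2504.17471 — 2 statements merged into one kernel-verified Lean document; each statement's English description precedes it below -/
import Mathlib

section
/- Let H > 0, α > 0, B > 0, and 0 ≤ c₀ < H. Define c(t) = H - (H - c₀)·exp(-(α/H)·t), B(t) = B/(B + c(t)), and f = B/(B + H). Then for all t ≥ 0 one has f ≤ B(t) and B(t) - f ≤ (B·(H - c₀)/((B + c₀)·(B + H)))·exp(-(α/H)·t); in particular B(t) - f decays exponentially to 0. -/
/-- The local Byzantine fraction `B(t) = B/(B + c(t))` satisfies `f ≤ B(t)` and
`B(t) - f ≤ (B·(H - c₀)/((B + c₀)·(B + H)))·exp(-(α/H)·t)` for all `t ≥ 0`, where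
`f = B/(B + H)`; in particular `B(t) - f` decays (exponentially) to `0`. -/
theorem haps_byzantine_fraction_decay (H α B c₀ : ℝ) (hH : 0 < H) (hα : 0 < α) (hB : 0 < B)
    (hc₀0 : 0 ≤ c₀) (hc₀H : c₀ < H)
    (c Bt : ℝ → ℝ) (f : ℝ)
    (hc : ∀ t, c t = H - (H - c₀) * Real.exp (-(α / H) * t))
    (hBt : ∀ t, Bt t = B / (B + c t))
    (hf : f = B / (B + H)) :
    (∀ t : ℝ, 0 ≤ t →
      f ≤ Bt t ∧
      Bt t - f ≤ (B * (H - c₀) / ((B + c₀) * (B + H))) * Real.exp (-(α / H) * t)) ∧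
    Filter.Tendsto (fun t => Bt t - f) Filter.atTop (nhds 0) := by
  have h0 : (0:ℝ) < B + c₀ := by linarith
  have h2 : (0:ℝ) < B + H := by linarith
  have key : ∀ t : ℝ, 0 ≤ t →
      f ≤ Bt t ∧
      Bt t - f ≤ (B * (H - c₀) / ((B + c₀) * (B + H))) * Real.exp (-(α / H) * t) := by
    intro t ht
    set E := Real.exp (-(α / H) * t) with hE
    have hEpos : 0 < E := Real.exp_pos _
    have hE1 : E ≤ 1 := Real.exp_le_one_iff.2 (by
      have : 0 ≤ α / H := le_of_lt (div_pos hα hH)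
      nlinarith)
    have hclo : c₀ ≤ c t := by rw [hc]; nlinarith
    have hchi : c t < H := by rw [hc]; nlinarith
    have h1 : (0:ℝ) < B + c t := by linarith
    constructor
    · rw [hBt, hf]
      exact div_le_div_of_nonneg_left hB.le h1 (by linarith)
    · rw [hBt, hf, div_sub_div _ _ (ne_of_gt h1) (ne_of_gt h2),
        div_mul_eq_mul_div, div_le_div_iff₀ (by positivity) (by positivity)]
      have hct : H - c t = (H - c₀) * E := by rw [hc]; ring
      have e1 : B * (B + H) - (B + c t) * B = B * ((H - c₀) * E) := by
        rw [← hct]; ring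
      rw [e1]
      nlinarith [mul_nonneg (mul_nonneg (mul_nonneg (mul_nonneg hB.le
        (by linarith : (0:ℝ) ≤ H - c₀)) hEpos.le) h2.le)
        (by linarith : (0:ℝ) ≤ c t - c₀)]
  refine ⟨key, ?_⟩
  have h1 : Filter.Tendsto (fun t : ℝ => (α / H) * t) Filter.atTop Filter.atTop :=
    Filter.Tendsto.const_mul_atTop (div_pos hα hH) Filter.tendsto_id
  have h2' : Filter.Tendsto (fun t : ℝ => Real.exp (-(α / H) * t)) Filter.atTop (nhds 0) := by
    have h := Real.tendsto_exp_neg_atTop_nhds_zero.comp h1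
    exact h.congr fun t => by simp [Function.comp, neg_mul]
  have h3 := h2'.const_mul (B * (H - c₀) / ((B + c₀) * (B + H)))
  rw [mul_zero] at h3
  apply squeeze_zero' (g := fun t => (B * (H - c₀) / ((B + c₀) * (B + H))) * Real.exp (-(α / H) * t))
  · filter_upwards [Filter.eventually_ge_atTop (0:ℝ)] with t ht
    have := (key t ht).1
    linarith
  · filter_upwards [Filter.eventually_ge_atTop (0:ℝ)] with t ht
    exact (key t ht).2
  · exact h3
end

section
/- Let v be a positive integer, p ∈ [0, 1] with p > 0, and κ ∈ (0, 1). Let X₁, …, X_v be independent Bernoulli random variables on a probability space with P(Xᵢ = 1) = pᵢ ≤ p for each i, and set X = X₁ + ⋯ + X_v. Let m = v·p and δ = (-ln κ + √((ln κ)² - 8·m·(ln κ)))/(2·m). Then P(X ≥ (1 + δ)·v·p) ≤ κ. -/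
/-!
Chernoff's method: for independent `{0,1}`-valued `Xᵢ` with means `qᵢ`,
`E[e^{t ∑ Xᵢ}] = ∏ (1 + (eᵗ - 1) qᵢ) ≤ exp ((eᵗ - 1) ∑ qᵢ)`. Taking `t = log (1 + δ)` and using
`log (1 + δ) ≥ 2δ / (2 + δ)` gives `P(∑ Xᵢ ≥ (1 + δ) m) ≤ exp (-δ² m / (2 + δ))` whenever
`∑ qᵢ ≤ m`, and APT's `δ` is precisely the solution of `δ² m / (2 + δ) = -log κ`.
-/

open MeasureTheory ProbabilityTheory Real

section Bernoulli

variable {Ω ι : Type*}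

lemma exp_mul_eq_one_add_indicator_of_bernoulli {Y : Ω → ℝ} (hY : ∀ ω, Y ω = 0 ∨ Y ω = 1)
    (t : ℝ) :
    (fun ω ↦ exp (t * Y ω)) = fun ω ↦ 1 + {ω | Y ω = 1}.indicator (fun _ ↦ exp t - 1) ω := by
  funext ω
  rcases hY ω with h | h <;> simp [h, Set.indicator]

variable [MeasurableSpace Ω] {μ : Measure Ω} [IsProbabilityMeasure μ]

lemma mgf_eq_of_bernoulli {Y : Ω → ℝ} (hY_meas : Measurable Y) (hY : ∀ ω, Y ω = 0 ∨ Y ω = 1)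
    (t : ℝ) : mgf Y μ t = 1 + (exp t - 1) * μ.real {ω | Y ω = 1} := by
  have hs : MeasurableSet {ω | Y ω = 1} := hY_meas (measurableSet_singleton 1)
  rw [mgf, exp_mul_eq_one_add_indicator_of_bernoulli hY,
    integral_add (integrable_const 1) ((integrable_const _).indicator hs),
    integral_indicator_const _ hs]
  simp [mul_comm]

lemma integrable_exp_mul_of_bernoulli {Y : Ω → ℝ} (hY_meas : Measurable Y)
    (hY : ∀ ω, Y ω = 0 ∨ Y ω = 1) (t : ℝ) : Integrable (fun ω ↦ exp (t * Y ω)) μ := by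
  rw [exp_mul_eq_one_add_indicator_of_bernoulli hY]
  exact (integrable_const 1).add
    ((integrable_const _).indicator (hY_meas (measurableSet_singleton 1)))

lemma mgf_le_exp_of_bernoulli {Y : Ω → ℝ} (hY_meas : Measurable Y)
    (hY : ∀ ω, Y ω = 0 ∨ Y ω = 1) (t : ℝ) :
    mgf Y μ t ≤ exp ((exp t - 1) * μ.real {ω | Y ω = 1}) := by
  rw [mgf_eq_of_bernoulli hY_meas hY, add_comm]
  exact add_one_le_exp _

variable [Fintype ι] {X : ι → Ω → ℝ}

lemma mgf_sum_le_exp_of_bernoulli (hmeas : ∀ i, Measurable (X i))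
    (hX : ∀ i ω, X i ω = 0 ∨ X i ω = 1) (hindep : iIndepFun X μ) (t : ℝ) :
    mgf (∑ i, X i) μ t ≤ exp ((exp t - 1) * ∑ i, μ.real {ω | X i ω = 1}) := by
  rw [hindep.mgf_sum hmeas, Finset.mul_sum, exp_sum]
  exact Finset.prod_le_prod (fun _ _ ↦ mgf_nonneg)
    fun i _ ↦ mgf_le_exp_of_bernoulli (hmeas i) (hX i) t

theorem measure_ge_le_exp_of_bernoulli (hmeas : ∀ i, Measurable (X i))
    (hX : ∀ i ω, X i ω = 0 ∨ X i ω = 1) (hindep : iIndepFun X μ) {m : ℝ}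
    (hmean : ∑ i, μ.real {ω | X i ω = 1} ≤ m) (a : ℝ) {t : ℝ} (ht : 0 ≤ t) :
    μ.real {ω | a ≤ ∑ i, X i ω} ≤ exp (-t * a + (exp t - 1) * m) := by
  have hint : Integrable (fun ω ↦ exp (t * (∑ i, X i) ω)) μ :=
    hindep.integrable_exp_mul_sum hmeas fun i _ ↦
      integrable_exp_mul_of_bernoulli (hmeas i) (hX i) t
  have hexpt : 0 ≤ exp t - 1 := by linarith [one_le_exp ht]
  calc μ.real {ω | a ≤ ∑ i, X i ω}
      = μ.real {ω | a ≤ (∑ i, X i) ω} := by simp only [Finset.sum_apply]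
    _ ≤ exp (-t * a) * mgf (∑ i, X i) μ t := measure_ge_le_exp_mul_mgf a ht hint
    _ ≤ exp (-t * a) * exp ((exp t - 1) * m) := by
        gcongr
        exact (mgf_sum_le_exp_of_bernoulli hmeas hX hindep t).trans
          (exp_le_exp.2 (mul_le_mul_of_nonneg_left hmean hexpt))
    _ = exp (-t * a + (exp t - 1) * m) := (exp_add _ _).symm

theorem measure_one_add_mul_le_sum_le_of_bernoulli (hmeas : ∀ i, Measurable (X i))
    (hX : ∀ i ω, X i ω = 0 ∨ X i ω = 1) (hindep : iIndepFun X μ) {m : ℝ}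
    (hmean : ∑ i, μ.real {ω | X i ω = 1} ≤ m) {δ : ℝ} (hδ : 0 ≤ δ) :
    μ.real {ω | (1 + δ) * m ≤ ∑ i, X i ω} ≤ exp (-(δ ^ 2 * m / (2 + δ))) := by
  have hm : 0 ≤ m := (Finset.sum_nonneg fun _ _ ↦ measureReal_nonneg).trans hmean
  have hδ1 : 1 ≤ 1 + δ := by linarith
  calc μ.real {ω | (1 + δ) * m ≤ ∑ i, X i ω}
      ≤ exp (-log (1 + δ) * ((1 + δ) * m) + (exp (log (1 + δ)) - 1) * m) :=
        measure_ge_le_exp_of_bernoulli hmeas hX hindep hmean _ (log_nonneg hδ1)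
    _ ≤ exp (-(2 * δ / (δ + 2)) * ((1 + δ) * m) + δ * m) := by
        rw [exp_log (by linarith), add_sub_cancel_left]
        gcongr
        exact le_log_one_add_of_nonneg hδ
    _ = exp (-(δ ^ 2 * m / (2 + δ))) := by
        congr 1
        field_simp
        ring

end Bernoulli

section QuadraticRoot

variable {ℓ m δ : ℝ}

lemma nonneg_of_eq_root (hm : 0 ≤ m) (hδ : δ = (-ℓ + √(ℓ ^ 2 - 8 * m * ℓ)) / (2 * m))
    (hℓ : ℓ ≤ 0) : 0 ≤ δ :=
  hδ ▸ div_nonneg (by linarith [sqrt_nonneg (ℓ ^ 2 - 8 * m * ℓ)]) (by positivity)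

lemma sq_mul_div_two_add_eq_of_eq_root (hm : 0 < m)
    (hδ : δ = (-ℓ + √(ℓ ^ 2 - 8 * m * ℓ)) / (2 * m)) (hℓ : ℓ ≤ 0) :
    δ ^ 2 * m / (2 + δ) = -ℓ := by
  have hδ0 : 0 ≤ δ := nonneg_of_eq_root hm.le hδ hℓ
  have hsqrt : √(ℓ ^ 2 - 8 * m * ℓ) = 2 * m * δ + ℓ := by
    rw [hδ]; field_simp; ring
  have hroot : m * δ ^ 2 = -ℓ * (2 + δ) := by
    have hsq := sq_sqrt (by nlinarith : (0 : ℝ) ≤ ℓ ^ 2 - 8 * m * ℓ)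
    rw [hsqrt] at hsq
    have h4m : (4 * m) * (m * δ ^ 2) = (4 * m) * (-ℓ * (2 + δ)) := by linear_combination hsq
    exact mul_left_cancel₀ (by positivity) h4m
  rw [div_eq_iff (by linarith), mul_comm _ m, hroot]

end QuadraticRoot

theorem apt_filtering_guarantee_general
    {Ω : Type*} [MeasureSpace Ω] [IsProbabilityMeasure (ℙ : Measure Ω)]
    (v : ℕ) (hv : 0 < v) (p κ : ℝ) (hppos : 0 < p)
    (hκ : κ ∈ Set.Ioo (0 : ℝ) 1)
    (X : Fin v → Ω → ℝ)
    (hmeas : ∀ i, Measurable (X i))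
    (hBer : ∀ i ω, X i ω = 0 ∨ X i ω = 1)
    (hindep : iIndepFun X ℙ)
    (hXp : ∀ i, (ℙ {ω | X i ω = 1}).toReal ≤ p)
    (m δ : ℝ) (hm : m = v * p)
    (hδ : δ = (-Real.log κ + Real.sqrt ((Real.log κ) ^ 2 - 8 * m * Real.log κ)) / (2 * m)) :
    (ℙ {ω | (1 + δ) * (v * p) ≤ ∑ i, X i ω}).toReal ≤ κ := by
  obtain ⟨hκ0, hκ1⟩ := hκ
  have hm0 : 0 < m := hm ▸ by positivity
  have hlog : log κ ≤ 0 := (log_neg hκ0 hκ1).le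
  have hδ0 : 0 ≤ δ := nonneg_of_eq_root hm0.le hδ hlog
  have hmean : ∑ i, (ℙ : Measure Ω).real {ω | X i ω = 1} ≤ m := by
    simpa [hm] using Finset.sum_le_card_nsmul Finset.univ
      (fun i ↦ (ℙ : Measure Ω).real {ω | X i ω = 1}) p fun i _ ↦ hXp i
  rw [← hm]
  calc (ℙ {ω | (1 + δ) * m ≤ ∑ i, X i ω}).toReal ≤ exp (-(δ ^ 2 * m / (2 + δ))) :=
        measure_one_add_mul_le_sum_le_of_bernoulli hmeas hBer hindep hmean hδ0
    _ = κ := by rw [sq_mul_div_two_add_eq_of_eq_root hm0 hδ hlog, neg_neg, exp_log hκ0]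

/-- APT Filtering Guarantee: let `X = X₁ + ⋯ + X_v` be a sum of `v` independent
Bernoulli random variables with `P(Xᵢ = 1) = pᵢ ≤ p`, let `m = v·p` and
`δ = (-ln κ + √((ln κ)² - 8·m·(ln κ)))/(2·m)`. Then `P(X ≥ (1 + δ)·v·p) ≤ κ`. -/
theorem apt_filtering_guarantee
    {Ω : Type*} [MeasureSpace Ω] [IsProbabilityMeasure (ℙ : Measure Ω)]
    (v : ℕ) (hv : 0 < v) (p κ : ℝ) (hp0 : 0 ≤ p) (hp1 : p ≤ 1) (hppos : 0 < p)
    (hκ : κ ∈ Set.Ioo (0 : ℝ) 1)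
    (X : Fin v → Ω → ℝ)
    (hmeas : ∀ i, Measurable (X i))
    (hBer : ∀ i ω, X i ω = 0 ∨ X i ω = 1)
    (hindep : iIndepFun X ℙ)
    (hXp : ∀ i, (ℙ {ω | X i ω = 1}).toReal ≤ p)
    (m δ : ℝ) (hm : m = v * p)
    (hδ : δ = (-Real.log κ + Real.sqrt ((Real.log κ) ^ 2 - 8 * m * Real.log κ)) / (2 * m)) :
    (ℙ {ω | (1 + δ) * (v * p) ≤ ∑ i, X i ω}).toReal ≤ κ :=
  apt_filtering_guarantee_general v hv p κ hppos hκ X hmeas hBer hindep hXp m δ hm hδ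
end
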